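/- Let s₀ ≥ 1, let X be uniformly distributed on {0,1}^p with p ≥ s₀, and let m(X) = β·(1{Σ_{j=1}^{s₀} X_j is odd} − 1{Σ_{j=1}^{s₀} X_j is even}) for some β ∈ R. For any region t that is an intersection of halfspaces with P(X ∈ t) > 0, there exists a split (w,c) with ‖w‖₂ = 1, ‖w‖₀ ≤ s₀ such that E[Var(m(X) | 1_{X∈t}, 1_{w·X>c}) 1_{X∈t}] ≤ (1 − 2^{−s₀}) · E[Var(m(X) | 1_{X∈t}) 1_{X∈t}]. -/

import Mathlib

open MeasureTheory

/-- Conditional mean of `Y` on the event `S` (node mean). -/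
noncomputable def condMeanOn {Ω : Type*} [MeasurableSpace Ω] (μ : Measure Ω)
    (Y : Ω → ℝ) (S : Set Ω) : ℝ :=
  (∫ ω in S, Y ω ∂μ) / (μ S).toReal

/-- Conditional variance of `Y` on the event `S` (node variance). -/
noncomputable def condVarOn {Ω : Type*} [MeasurableSpace Ω] (μ : Measure Ω)
    (Y : Ω → ℝ) (S : Set Ω) : ℝ :=
  (∫ ω in S, (Y ω - condMeanOn μ Y S) ^ 2 ∂μ) / (μ S).toReal

/-!
On the hypercube a node's weighted variance is combinatorial: if the node contains `a` vertices of
odd parity and `b` of even parity, it equals `2^{-p} · 4β² · ab/(a+b)`. The parity of a vertex is a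
function of its pattern on the `s₀` active coordinates, and only `2^{s₀-1}` patterns have a given
parity, so by pigeonhole some pattern `A` is shared by `r ≥ 2εa` vertices of the minority class
(`a ≤ b`), where `ε = 2^{-s₀}`. The hyperplane `∑_{i<s₀} ±xᵢ > #A - 1/2`, with sign `+` exactly
on `A`, cuts these vertices out of the node. That child is pure, and the other one has impurity
`(a-r)b/(a-r+b) ≤ (1-ε) · ab/(a+b)`.
-/

open Finset
open scoped ENNReal

lemma sub_mul_div_sub_add_le {a b r ε : ℝ} (hr : 0 ≤ r) (hra : r ≤ a) (hab : a ≤ b)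
    (hε : 2 * ε * a ≤ r) : (a - r) * b / (a - r + b) ≤ (1 - ε) * (a * b / (a + b)) := by
  rcases (hr.trans (hra.trans hab)).eq_or_lt with hb | hb
  · have ha : a = 0 := by linarith
    simp [← hb, ha]
  · have key : ε * a * (a - r + b) ≤ r * b := by
      rcases le_or_gt 0 ε with hε0 | hε0
      · nlinarith [mul_nonneg (mul_nonneg hε0 (hr.trans hra)) (sub_nonneg.2 hab)]
      · nlinarith [mul_nonneg (hr.trans hra) (by linarith : (0:ℝ) ≤ a - r + b)]
    rw [mul_div_assoc', div_le_div_iff₀ (by linarith) (by linarith)]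
    nlinarith [mul_le_mul_of_nonneg_left key hb.le]

section Impurity

variable {V : Type*}

noncomputable def impurity (D : Finset V) (ℓ : V → Prop) [DecidablePred ℓ] : ℝ :=
  #{v ∈ D | ℓ v} * #{v ∈ D | ¬ ℓ v} / #D

variable (D : Finset V) (ℓ : V → Prop) [DecidablePred ℓ]

lemma impurity_eq : impurity D ℓ =
    #{v ∈ D | ℓ v} * #{v ∈ D | ¬ ℓ v} / (#{v ∈ D | ℓ v} + #{v ∈ D | ¬ ℓ v}) := by
  rw [impurity, ← Nat.cast_add, card_filter_add_card_filter_not]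

lemma impurity_not : impurity D (fun v => ¬ ℓ v) = impurity D ℓ := by
  simp only [impurity, not_not]
  ring

lemma impurity_eq_zero_of_forall (h : ∀ v ∈ D, ℓ v) : impurity D ℓ = 0 := by
  simp [impurity, filter_eq_empty_iff.2 fun v hv => not_not.2 (h v hv)]

lemma impurity_eq_zero_of_forall_not (h : ∀ v ∈ D, ¬ ℓ v) : impurity D ℓ = 0 := by
  rw [← impurity_not]
  exact impurity_eq_zero_of_forall D _ h

lemma sum_sq_sub_avg_eq_impurity (β : ℝ) :
    ∑ v ∈ D, ((if ℓ v then β else -β) - (∑ u ∈ D, if ℓ u then β else -β) / #D) ^ 2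
      = 4 * β ^ 2 * impurity D ℓ := by
  rcases D.eq_empty_or_nonempty with rfl | hD
  · simp [impurity]
  have hcard : (#{v ∈ D | ℓ v} : ℝ) + #{v ∈ D | ¬ ℓ v} ≠ 0 := by
    rw [← Nat.cast_add, card_filter_add_card_filter_not]
    exact_mod_cast hD.card_pos.ne'
  set M := (∑ u ∈ D, if ℓ u then β else -β) / #D with hM
  have hsq : ∀ v, ((if ℓ v then β else -β) - M) ^ 2 = if ℓ v then (β - M) ^ 2 else (-β - M) ^ 2 :=
    fun v => by split_ifs <;> rfl
  simp only [hsq, sum_ite, sum_const, nsmul_eq_mul] at hM ⊢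
  rw [hM, impurity_eq, ← card_filter_add_card_filter_not (p := ℓ) (s := D)]
  push_cast
  field_simp
  ring

end Impurity

section Split

variable {V κ : Type*} [DecidableEq κ] (D : Finset V) (π : V → κ) (L : κ → Prop) [DecidablePred L]

lemma impurity_add_impurity_of_pure_fiber {k : κ} (hLk : L k) :
    impurity {v ∈ D | π v = k} (fun v => L (π v)) + impurity {v ∈ D | π v ≠ k} (fun v => L (π v))
      = ((#{v ∈ D | L (π v)} : ℝ) - #{v ∈ D | π v = k}) * #{v ∈ D | ¬ L (π v)}
        / ((#{v ∈ D | L (π v)} : ℝ) - #{v ∈ D | π v = k} + #{v ∈ D | ¬ L (π v)}) := by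
  have hL : (#{v ∈ {v ∈ D | π v ≠ k} | L (π v)} : ℝ)
      = #{v ∈ D | L (π v)} - #{v ∈ D | π v = k} := by
    rw [eq_sub_iff_add_eq, ← Nat.cast_add,
      ← card_filter_add_card_filter_not (s := {v ∈ D | L (π v)}) (p := fun v => π v ≠ k)]
    congr 3 <;> ext v <;> simp only [mem_filter, not_not] <;> aesop
  have hnL : {v ∈ {v ∈ D | π v ≠ k} | ¬ L (π v)} = {v ∈ D | ¬ L (π v)} := by
    ext v; simp only [mem_filter]
    exact ⟨fun h => ⟨h.1.1, h.2⟩, fun h => ⟨⟨h.1, fun hv => h.2 (hv ▸ hLk)⟩, h.2⟩⟩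
  rw [impurity_eq_zero_of_forall _ _ fun v hv => (mem_filter.1 hv).2 ▸ hLk, zero_add,
    impurity_eq, hL, hnL]

variable {T : Finset κ} (hπ : ∀ v ∈ D, π v ∈ T) (hT : T.Nonempty) {N : ℕ} {ε : ℝ}
  (hεN : 2 * ε * N ≤ 1)
include hπ hT hεN

lemma exists_pure_fiber_split_of_minority (hN : #{k ∈ T | L k} ≤ N)
    (hmin : #{v ∈ D | L (π v)} ≤ #{v ∈ D | ¬ L (π v)}) :
    ∃ k ∈ T, impurity {v ∈ D | π v = k} (fun v => L (π v))
      + impurity {v ∈ D | π v ≠ k} (fun v => L (π v))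
      ≤ (1 - ε) * impurity D (fun v => L (π v)) := by
  set s := {v ∈ D | L (π v)} with hs
  rcases s.eq_empty_or_nonempty with hs0 | ⟨v₀, hv₀⟩
  · have hnone : ∀ v ∈ D, ¬ L (π v) := by simpa [hs] using hs0
    obtain ⟨k, hk⟩ := hT
    refine ⟨k, hk, ?_⟩
    rw [impurity_eq_zero_of_forall_not _ _ hnone,
      impurity_eq_zero_of_forall_not _ _ fun v hv => hnone v (mem_filter.1 hv).1,
      impurity_eq_zero_of_forall_not _ _ fun v hv => hnone v (mem_filter.1 hv).1]
    simp
  have hπs : ∀ v ∈ s, π v ∈ {k ∈ T | L k} := fun v hv =>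
    mem_filter.2 ⟨hπ v (mem_filter.1 hv).1, (mem_filter.1 hv).2⟩
  have hNpos : (0 : ℝ) < N := by exact_mod_cast (card_pos.2 ⟨_, hπs v₀ hv₀⟩).trans_le hN
  obtain ⟨k, hk, hfiber⟩ := exists_le_card_fiber_of_nsmul_le_card_of_maps_to hπs
    ⟨_, hπs v₀ hv₀⟩ (b := (#s : ℝ) / N) (by
      rw [nsmul_eq_mul]
      calc (#{k ∈ T | L k} : ℝ) * (#s / N) ≤ N * (#s / N) := by gcongr
        _ = #s := by field_simp)
  obtain ⟨hkT, hLk⟩ := mem_filter.1 hk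
  have hfiber_eq : {v ∈ s | π v = k} = {v ∈ D | π v = k} := by
    ext v; simp only [hs, mem_filter]; aesop
  rw [hfiber_eq] at hfiber
  refine ⟨k, hkT, ?_⟩
  rw [impurity_add_impurity_of_pure_fiber D π L hLk, impurity_eq]
  refine sub_mul_div_sub_add_le (by positivity)
    (by exact_mod_cast hfiber_eq ▸ card_filter_le s _) (by exact_mod_cast hmin) ?_
  calc 2 * ε * #s = 2 * ε * N * (#s / N) := by field_simp
    _ ≤ 1 * (#s / N) := by gcongr
    _ ≤ _ := by rwa [one_mul]

lemma exists_pure_fiber_split (hL : #{k ∈ T | L k} ≤ N) (hnL : #{k ∈ T | ¬ L k} ≤ N) :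
    ∃ k ∈ T, impurity {v ∈ D | π v = k} (fun v => L (π v))
      + impurity {v ∈ D | π v ≠ k} (fun v => L (π v))
      ≤ (1 - ε) * impurity D (fun v => L (π v)) := by
  rcases le_total #{v ∈ D | L (π v)} #{v ∈ D | ¬ L (π v)} with hmin | hmin
  · exact exists_pure_fiber_split_of_minority D π L hπ hT hεN hL hmin
  · simp only [← impurity_not _ (fun v => L (π v))]
    exact exists_pure_fiber_split_of_minority D π (fun k => ¬ L k) hπ hT hεN hnL
      (by simpa only [not_not] using hmin)

end Split

lemma card_powerset_filter_odd_eq {ι : Type*} {F : Finset ι} (hF : F.Nonempty) :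
    #{A ∈ F.powerset | Odd #A} = #{A ∈ F.powerset | ¬ Odd #A} := by
  have h := sum_powerset_neg_one_pow_card_of_nonempty hF
  rw [← sum_filter_add_sum_filter_not _ (fun A => Odd #A),
    sum_congr rfl (fun A hA => (mem_filter.1 hA).2.neg_one_pow),
    sum_congr rfl (fun A hA => (Nat.not_odd_iff_even.1 (mem_filter.1 hA).2).neg_one_pow),
    sum_const, sum_const] at h
  simp only [nsmul_eq_mul, mul_neg, mul_one] at h
  omega

lemma card_powerset_filter_odd {ι : Type*} {F : Finset ι} (hF : F.Nonempty) :
    #{A ∈ F.powerset | Odd #A} = 2 ^ (#F - 1) := by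
  have h := card_filter_add_card_filter_not (s := F.powerset) (p := fun A => Odd #A)
  rw [← card_powerset_filter_odd_eq hF, card_powerset,
    ← Nat.sub_add_cancel (show 1 ≤ #F from hF.card_pos), pow_succ] at h
  omega

lemma two_mul_half_pow_mul_two_pow_pred {n : ℕ} (hn : 1 ≤ n) :
    2 * (1 / 2 : ℝ) ^ n * (2 ^ (n - 1) : ℕ) = 1 := by
  obtain ⟨k, rfl⟩ := Nat.exists_eq_add_of_le' hn
  simp [pow_succ, mul_comm]

section Hyperplane

variable {ι : Type*}

def cubeVertex (v : ι → Bool) : ι → ℝ := fun i => if v i then 1 else 0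

lemma cubeVertex_eq_one_iff (v : ι → Bool) (i : ι) : cubeVertex v i = 1 ↔ v i = true := by
  cases h : v i <;> simp [cubeVertex, h]

lemma cubeVertex_injective : Function.Injective (cubeVertex (ι := ι)) := fun u v h =>
  funext fun i => by
    have hi := congrFun h i
    cases hu : u i <;> cases hv : v i <;> simp [cubeVertex, hu, hv] at hi ⊢

variable [DecidableEq ι]

noncomputable def splitDir (F A : Finset ι) : ι → ℝ :=
  fun i => (if i ∈ F then (if i ∈ A then 1 else -1) else 0) / √(#F : ℝ)

noncomputable def splitThreshold (F A : Finset ι) : ℝ := (#A - 1 / 2) / √(#F : ℝ)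

variable {F : Finset ι}

lemma ncard_support_splitDir_le (A : Finset ι) : {i | splitDir F A i ≠ 0}.ncard ≤ #F := by
  calc {i | splitDir F A i ≠ 0}.ncard ≤ (F : Set ι).ncard :=
        Set.ncard_le_ncard
          (fun i hi => by_contra fun h => hi (by simp [splitDir, show i ∉ F from h])) F.finite_toSet
    _ = #F := Set.ncard_coe_finset F

lemma sum_sign_mul_cubeVertex {A : Finset ι} (hA : A ⊆ F) (v : ι → Bool) :
    ∑ i ∈ F, (if i ∈ A then 1 else -1) * cubeVertex v i
      = #A - #{i ∈ F | ¬ (v i = true ↔ i ∈ A)} := by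
  have hterm : ∀ i, (if i ∈ A then (1 : ℝ) else -1) * cubeVertex v i
      = (if i ∈ A then 1 else 0) - (if ¬ (v i = true ↔ i ∈ A) then 1 else 0) := by
    intro i
    by_cases hi : i ∈ A <;> cases hv : v i <;> simp [cubeVertex, hi, hv]
  rw [sum_congr rfl (fun i _ => hterm i), sum_sub_distrib, sum_boole, sum_boole,
    filter_mem_eq_inter, inter_eq_right.2 hA]

variable [Fintype ι]

lemma sum_splitDir_sq (hF : F.Nonempty) (A : Finset ι) : ∑ i, splitDir F A i ^ 2 = 1 := by
  have hsq : ∀ i, splitDir F A i ^ 2 = if i ∈ F then (#F : ℝ)⁻¹ else 0 := by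
    intro i
    simp only [splitDir, div_pow, Real.sq_sqrt (Nat.cast_nonneg _)]
    split_ifs <;> simp
  simp only [hsq, sum_ite_mem, univ_inter, sum_const, nsmul_eq_mul]
  exact mul_inv_cancel₀ (by exact_mod_cast hF.card_pos.ne')

lemma splitThreshold_lt_iff (hF : F.Nonempty) {A : Finset ι} (hA : A ⊆ F) (v : ι → Bool) :
    splitThreshold F A < ∑ i, splitDir F A i * cubeVertex v i ↔ {i ∈ F | v i = true} = A := by
  have hsum : ∑ i, splitDir F A i * cubeVertex v i
      = (∑ i ∈ F, (if i ∈ A then 1 else -1) * cubeVertex v i) / √(#F : ℝ) := by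
    simp only [splitDir, div_mul_eq_mul_div, ← sum_div, ite_mul, zero_mul, sum_ite_mem,
      univ_inter]
  have hpos : (0 : ℝ) < √(#F : ℝ) := Real.sqrt_pos.2 (by exact_mod_cast hF.card_pos)
  rw [hsum, splitThreshold, div_lt_div_iff_of_pos_right hpos, sum_sign_mul_cubeVertex hA,
    sub_lt_sub_iff_left]
  have hsmall : ∀ n : ℕ, (n : ℝ) < 1 / 2 ↔ n = 0 := fun n =>
    ⟨fun h => Nat.lt_one_iff.1 (by exact_mod_cast h.trans one_half_lt_one), fun h => by simp [h]⟩
  rw [hsmall, card_eq_zero, filter_eq_empty_iff]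
  simp only [not_not, Finset.ext_iff, mem_filter]
  exact ⟨fun h i => ⟨fun hi => (h hi.1).1 hi.2, fun hi => ⟨hA hi, (h (hA hi)).2 hi⟩⟩,
    fun h i hi => ⟨fun hv => (h i).1 ⟨hi, hv⟩, fun hiA => ((h i).2 hiA).2⟩⟩

end Hyperplane

lemma toReal_measure_mul_condVarOn {Ω : Type*} [MeasurableSpace Ω] (μ : Measure Ω)
    [IsFiniteMeasure μ] (Y : Ω → ℝ) (S : Set Ω) :
    (μ S).toReal * condVarOn μ Y S = ∫ x in S, (Y x - condMeanOn μ Y S) ^ 2 ∂μ := by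
  rcases eq_or_ne (μ S) 0 with hS | hS
  · simp [Measure.restrict_eq_zero.2 hS, hS]
  · exact mul_div_cancel₀ _ (ENNReal.toReal_ne_zero.2 ⟨hS, measure_ne_top μ S⟩)

section UniformOnFinitePoints

variable {α V : Type*} [MeasurableSpace α] [MeasurableSingletonClass α] [Fintype V] [Nonempty V]
  {μ : Measure α} [IsProbabilityMeasure μ] {e : V → α}
  (he : Function.Injective e) (hμ : ∀ v, μ {e v} = (Fintype.card V : ℝ≥0∞)⁻¹)
include he hμ

lemma ae_mem_range : ∀ᵐ x ∂μ, x ∈ Set.range e := by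
  refine mem_ae_iff.2 ((prob_compl_eq_zero_iff (Set.finite_range e).measurableSet).2 ?_)
  rw [← Set.iUnion_singleton_eq_range, measure_iUnion
    (fun u v huv => Set.disjoint_singleton.2 (he.ne huv)) (fun _ => measurableSet_singleton _),
    tsum_fintype, sum_congr rfl (fun v _ => hμ v), sum_const, card_univ, nsmul_eq_mul]
  exact ENNReal.mul_inv_cancel (by simp) (by simp)

lemma setIntegral_eq_sum_div_card {S : Set α} {D : Finset V} (hD : ∀ v, v ∈ D ↔ e v ∈ S)
    (f : α → ℝ) : ∫ x in S, f x ∂μ = (∑ v ∈ D, f (e v)) / Fintype.card V := by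
  have hS : S =ᵐ[μ] (D.map ⟨e, he⟩ : Set α) := by
    refine Filter.eventuallyEq_set.2 ?_
    filter_upwards [ae_mem_range he hμ] with x ⟨v, hv⟩
    simp [← hv, hD, he.eq_iff]
  rw [setIntegral_congr_set hS, setIntegral_finset _ IntegrableOn.finset, sum_map, sum_div]
  refine sum_congr rfl fun v _ => ?_
  simp [measureReal_def, hμ, div_eq_inv_mul]

lemma toReal_measure_eq_card_div_card {S : Set α} {D : Finset V} (hD : ∀ v, v ∈ D ↔ e v ∈ S) :
    (μ S).toReal = #D / Fintype.card V := by
  simpa [measureReal_def] using setIntegral_eq_sum_div_card he hμ hD (fun _ => (1 : ℝ))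

lemma condMeanOn_eq_avg {S : Set α} {D : Finset V} (hD : ∀ v, v ∈ D ↔ e v ∈ S) (f : α → ℝ) :
    condMeanOn μ f S = (∑ v ∈ D, f (e v)) / #D := by
  rw [condMeanOn, setIntegral_eq_sum_div_card he hμ hD, toReal_measure_eq_card_div_card he hμ hD,
    div_div_div_cancel_right₀ (by simp)]

lemma toReal_measure_mul_condVarOn_eq_impurity {S : Set α} {D : Finset V}
    (hD : ∀ v, v ∈ D ↔ e v ∈ S) {m : α → ℝ} {β : ℝ} {ℓ : V → Prop} [DecidablePred ℓ]
    (hm : ∀ v, m (e v) = if ℓ v then β else -β) :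
    (μ S).toReal * condVarOn μ m S = 4 * β ^ 2 / Fintype.card V * impurity D ℓ := by
  rw [toReal_measure_mul_condVarOn, setIntegral_eq_sum_div_card he hμ hD,
    condMeanOn_eq_avg he hμ hD]
  simp only [hm]
  rw [sum_sq_sub_avg_eq_impurity]
  ring

end UniformOnFinitePoints

theorem stmt_9_general (p s₀ : ℕ) (hs₀ : 1 ≤ s₀) (hps : s₀ ≤ p)
    (μ : Measure (Fin p → ℝ)) [IsProbabilityMeasure μ]
    (hunif : ∀ v : Fin p → Bool,
      μ {(fun i => if v i then (1 : ℝ) else 0)} = ((2 : ENNReal) ^ p)⁻¹)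
    (β : ℝ) (m : (Fin p → ℝ) → ℝ)
    (hm : ∀ x, m x = β *
      ((if Odd ((Finset.univ.filter (fun j : Fin p => j.val < s₀ ∧ x j = 1)).card)
          then (1 : ℝ) else 0)
        - (if Even ((Finset.univ.filter (fun j : Fin p => j.val < s₀ ∧ x j = 1)).card)
          then (1 : ℝ) else 0)))
    (t : Set (Fin p → ℝ)) :
    ∃ (w : Fin p → ℝ) (c : ℝ), (∑ i, (w i) ^ 2 = 1) ∧ {i | w i ≠ 0}.ncard ≤ s₀ ∧
      (μ (t ∩ {x | c < ∑ i, w i * x i})).toReal *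
          condVarOn μ m (t ∩ {x | c < ∑ i, w i * x i})
        + (μ (t ∩ {x | ∑ i, w i * x i ≤ c})).toReal *
          condVarOn μ m (t ∩ {x | ∑ i, w i * x i ≤ c})
      ≤ (1 - (1 / 2 : ℝ) ^ s₀) * ((μ t).toReal * condVarOn μ m t) := by
  classical
  set F : Finset (Fin p) := {j | j.val < s₀}
  have hFcard : #F = s₀ := by simp [F, Fin.card_filter_val_lt, hps]
  have hF : F.Nonempty := ⟨⟨0, by omega⟩, by simp [F]; omega⟩
  have hxor : ∀ v, m (cubeVertex v) = if Odd #{i ∈ F | v i = true} then β else -β := by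
    intro v
    have hfilter : univ.filter (fun j : Fin p => j.val < s₀ ∧ cubeVertex v j = 1)
        = {i ∈ F | v i = true} := by
      ext; simp [F, cubeVertex_eq_one_iff]
    rw [hm, hfilter]
    by_cases h : Odd #{i ∈ F | v i = true} <;> simp [h, ← Nat.not_odd_iff_even]
  have hμ : ∀ v, μ {cubeVertex v} = (Fintype.card (Fin p → Bool) : ℝ≥0∞)⁻¹ :=
    fun v => (hunif v).trans (by simp)
  obtain ⟨A, hA, hsplit⟩ := exists_pure_fiber_split {v | cubeVertex v ∈ t}
    (fun v => {i ∈ F | v i = true}) (fun A => Odd #A)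
    (fun v _ => mem_powerset.2 (filter_subset _ _)) ⟨∅, empty_mem_powerset _⟩
    (two_mul_half_pow_mul_two_pow_pred hs₀).le (hFcard ▸ card_powerset_filter_odd hF).le
    (card_powerset_filter_odd_eq hF ▸ hFcard ▸ card_powerset_filter_odd hF).le
  have hAF := mem_powerset.1 hA
  refine ⟨splitDir F A, splitThreshold F A, sum_splitDir_sq hF A,
    hFcard ▸ ncard_support_splitDir_le A, ?_⟩
  have hweight := fun S D hD =>
    toReal_measure_mul_condVarOn_eq_impurity cubeVertex_injective hμ (S := S) (D := D) hD hxor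
  rw [hweight _ _ ?right, hweight _ _ ?left, hweight t _ ?node, ← mul_add, mul_left_comm]
  · exact mul_le_mul_of_nonneg_left hsplit (by positivity)
  case right => intro v; simp [splitThreshold_lt_iff hF hAF]
  case left => intro v; simp [← not_lt, splitThreshold_lt_iff hF hAF]
  case node => simp

/-- The `s₀`-dimensional XOR function on binary features satisfies `SID(1 − 2^{−s₀}, s₀)` under
the uniform distribution on `{0,1}^p`: for every region `t` that is an intersection of halfspaces
with positive probability, some `s₀`-sparse unit split `(w,c)` decreases the weighted within-node
variance to at most a `(1 − 2^{−s₀})` fraction. -/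
theorem stmt_9 (p s₀ : ℕ) (hs₀ : 1 ≤ s₀) (hps : s₀ ≤ p)
    (μ : Measure (Fin p → ℝ)) [IsProbabilityMeasure μ]
    (hunif : ∀ v : Fin p → Bool,
      μ {(fun i => if v i then (1 : ℝ) else 0)} = ((2 : ENNReal) ^ p)⁻¹)
    (β : ℝ) (m : (Fin p → ℝ) → ℝ)
    (hm : ∀ x, m x = β *
      ((if Odd ((Finset.univ.filter (fun j : Fin p => j.val < s₀ ∧ x j = 1)).card)
          then (1 : ℝ) else 0)
        - (if Even ((Finset.univ.filter (fun j : Fin p => j.val < s₀ ∧ x j = 1)).card)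
          then (1 : ℝ) else 0)))
    (t : Set (Fin p → ℝ))
    (hreg : ∃ (l : ℕ) (w : Fin l → Fin p → ℝ) (c : Fin l → ℝ) (σ : Fin l → Bool),
      t = ⋂ j, (if σ j then {x | c j < ∑ i, w j i * x i} else {x | ∑ i, w j i * x i ≤ c j}))
    (hpos : 0 < μ t) :
    ∃ (w : Fin p → ℝ) (c : ℝ), (∑ i, (w i) ^ 2 = 1) ∧ {i | w i ≠ 0}.ncard ≤ s₀ ∧
      (μ (t ∩ {x | c < ∑ i, w i * x i})).toReal *
          condVarOn μ m (t ∩ {x | c < ∑ i, w i * x i})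
        + (μ (t ∩ {x | ∑ i, w i * x i ≤ c})).toReal *
          condVarOn μ m (t ∩ {x | ∑ i, w i * x i ≤ c})
      ≤ (1 - (1 / 2 : ℝ) ^ s₀) * ((μ t).toReal * condVarOn μ m t) :=
  stmt_9_general p s₀ hs₀ hps μ hunif β m hm t
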